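/- arXiv:1811.05194 — 4 statements merged into one kernel-verified Lean document; each statement's English description precedes it below -/
import Mathlib

section
/- Let B be a real number with 0 < B < 1. Then for every real number λ > 0 there exists a sequence of nonnegative integers n_0, n_1, n_2, ... such that λ = Σ_{j=0}^∞ n_j B^j. -/
noncomputable def rseq (B l : ℝ) : ℕ → ℝ
  | 0 => l
  | j + 1 => rseq B l j - ⌊rseq B l j / B ^ j⌋ * B ^ j

/-- If `0 < B < 1`, then for every real number `λ > 0` there is a sequence of
nonnegative integers `n₀, n₁, n₂, …` such that `λ = ∑_{j=0}^∞ n_j B^j`. -/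
theorem stmt0 (B : ℝ) (hB0 : 0 < B) (hB1 : B < 1) (l : ℝ) (hl : 0 < l) :
    ∃ n : ℕ → ℕ, HasSum (fun j : ℕ => (n j : ℝ) * B ^ j) l := by
  set r := rseq B l with hr
  have hpow : ∀ j : ℕ, (0 : ℝ) < B ^ j := fun j => pow_pos hB0 j
  have hnn : ∀ j, 0 ≤ r j := by
    intro j
    induction j with
    | zero => exact hl.le
    | succ j ih =>
      have h1 : (⌊r j / B ^ j⌋ : ℝ) ≤ r j / B ^ j := Int.floor_le _
      show 0 ≤ r j - ⌊r j / B ^ j⌋ * B ^ j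
      have h2 : (⌊r j / B ^ j⌋ : ℝ) * B ^ j ≤ r j := by
        rw [← le_div_iff₀ (hpow j)]; exact h1
      linarith
  have hlt : ∀ j, r (j + 1) < B ^ j := by
    intro j
    have h1 : r j / B ^ j < ⌊r j / B ^ j⌋ + 1 := Int.lt_floor_add_one _
    show r j - ⌊r j / B ^ j⌋ * B ^ j < B ^ j
    have := (div_lt_iff₀ (hpow j)).mp h1
    nlinarith [hpow j]
  set n : ℕ → ℕ := fun j => (⌊r j / B ^ j⌋).toNat with hn
  have hncast : ∀ j, (n j : ℝ) = (⌊r j / B ^ j⌋ : ℤ) := by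
    intro j
    have h0 : (0 : ℤ) ≤ ⌊r j / B ^ j⌋ :=
      Int.floor_nonneg.mpr (div_nonneg (hnn j) (hpow j).le)
    exact_mod_cast congrArg Int.cast (Int.toNat_of_nonneg h0)
  have hterm : ∀ j, (n j : ℝ) * B ^ j = r j - r (j + 1) := by
    intro j
    rw [hncast j]
    show _ = r j - (r j - ⌊r j / B ^ j⌋ * B ^ j)
    ring
  refine ⟨n, ?_⟩
  have hnonneg : ∀ j, 0 ≤ (n j : ℝ) * B ^ j :=
    fun j => mul_nonneg (Nat.cast_nonneg _) (hpow j).le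
  rw [hasSum_iff_tendsto_nat_of_nonneg hnonneg]
  have hsum : ∀ N, ∑ i ∈ Finset.range N, (n i : ℝ) * B ^ i = l - r N := by
    intro N
    have : ∑ i ∈ Finset.range N, (n i : ℝ) * B ^ i
        = ∑ i ∈ Finset.range N, (r i - r (i + 1)) := by
      exact Finset.sum_congr rfl fun i _ => hterm i
    rw [this, Finset.sum_range_sub' r]
    rfl
  simp only [hsum]
  have hr0 : Filter.Tendsto r Filter.atTop (nhds 0) := by
    rw [← Filter.tendsto_add_atTop_iff_nat 1]
    refine squeeze_zero (fun n => hnn _) (fun n => (hlt n).le) ?_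
    exact tendsto_pow_atTop_nhds_zero_of_lt_one hB0.le hB1
  have := Filter.Tendsto.const_sub l hr0
  simpa using this
end

section
/- Let 1 < p < ∞ with conjugate exponent p′. A function f: E(T) → ℝ is forward additive if and only if the vertex function g = I(f_p), where f_p(α) = sgn(f(α))|f(α)|^{p′−1} and If_p(x) = Σ_{α∈P(x)} f_p(α), is p-harmonic at every vertex x ≠ o, i.e. Σ_{y∼x} sgn(g(y)−g(x))|g(y)−g(x)|^{p−1} = 0. -/
open scoped ENNReal
open MeasureTheory

/-- A locally finite rooted tree, given by its set of edges. The root edge has no parent,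
every other edge has a parent, and every edge has finitely many children. -/
structure RTree where
  E : Type
  root : E
  parent : E → Option E
  parent_root : parent root = none
  parent_isSome : ∀ α, α ≠ root → (parent α).isSome
  level : E → ℕ
  level_root : level root = 0
  level_parent : ∀ α β, parent α = some β → level α = level β + 1
  locFin : ∀ α, {β | parent β = some α}.Finite

namespace RTree

variable (T : RTree)

/-- `Le T α β` : the edge `α` is an ancestor of (or equal to) the edge `β`,
i.e. `α ≤ β` in the natural partial order on edges. -/
def Le (α β : T.E) : Prop :=
  Relation.ReflTransGen (fun x y => T.parent y = some x) α β

/-- The boundary of `T`: half-infinite geodesics starting at the root edge. -/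
structure Boundary where
  seq : ℕ → T.E
  seq_zero : seq 0 = T.root
  seq_parent : ∀ n, T.parent (seq (n + 1)) = some (seq n)

/-- The boundary `∂T_α` of the tent over the edge `α`: boundary points whose
geodesic passes through `α`. -/
def tentB (α : T.E) : Set T.Boundary := {ζ | ∃ n, ζ.seq n = α}

/-- The standard topology on the boundary, with the tent boundaries as a basis. -/
def ttop : TopologicalSpace T.Boundary :=
  TopologicalSpace.generateFrom {s | ∃ α, s = T.tentB α}

/-- The Borel σ-algebra on the boundary. -/
def tborel : MeasurableSpace T.Boundary := @borel _ T.ttop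

/-- The set of edges of the tent `T_α`. -/
def tentE (α : T.E) : Set T.E := {β | T.Le α β}

/-- The relative potential `I_α f (ζ)`, summing `f` over the edges of the geodesic
from the root to `ζ` that lie in the tent `T_α`.  Taking `α` to be the root edge
gives the potential `If`. -/
noncomputable def relPot (α : T.E) (f : T.E → ℝ≥0∞) (ζ : T.Boundary) : ℝ≥0∞ :=
  ∑' n, Set.indicator (T.tentE α) f (ζ.seq n)

/-- The relative `p`-energy `‖f‖_{ℓ^p(E(T_α))}^p`. -/
noncomputable def relEnergy (p : ℝ) (α : T.E) (f : T.E → ℝ≥0∞) : ℝ≥0∞ :=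
  ∑' β, Set.indicator (T.tentE α) (fun γ => f γ ^ p) β

/-- The relative `p`-capacity `c_{p,α}(E)` of `E ⊆ ∂T`, with the tent `T_α`
as ambient tree. -/
noncomputable def relCap (p : ℝ) (α : T.E) (E : Set T.Boundary) : ℝ≥0∞ :=
  ⨅ f ∈ {f : T.E → ℝ≥0∞ | ∀ ζ ∈ E, 1 ≤ T.relPot α f ζ}, T.relEnergy p α f

/-- The `p`-capacity of a subset of the boundary. -/
noncomputable def cap (p : ℝ) (E : Set T.Boundary) : ℝ≥0∞ := T.relCap p T.root E

end RTree

/-- `sgn(t)·|t|^e`. -/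
noncomputable def sgnpow (t e : ℝ) : ℝ := Real.sign t * |t| ^ e

open RTree

section Aux

lemma sgnpow_neg' (t e : ℝ) : sgnpow (-t) e = - sgnpow t e := by
  simp [sgnpow, Real.sign_neg, abs_neg, neg_mul]

lemma sgnpow_zero' (e : ℝ) : sgnpow 0 e = 0 := by
  simp [sgnpow, Real.sign_zero]

lemma sgnpow_of_pos' {t : ℝ} (h : 0 < t) (e : ℝ) : sgnpow t e = t ^ e := by
  rw [sgnpow, Real.sign_of_pos h, abs_of_pos h, one_mul]

lemma sgnpow_sgnpow' {t a b : ℝ} (hab : a * b = 1) :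
    sgnpow (sgnpow t a) b = t := by
  have key : ∀ s : ℝ, 0 < s → sgnpow (sgnpow s a) b = s := by
    intro s hs
    rw [sgnpow_of_pos' hs, sgnpow_of_pos' (Real.rpow_pos_of_pos hs a),
      ← Real.rpow_mul hs.le, hab, Real.rpow_one]
  rcases lt_trichotomy t 0 with h | rfl | h
  · have ht : t = -(-t) := by ring
    rw [ht, sgnpow_neg', sgnpow_neg', key (-t) (by linarith)]
  · rw [sgnpow_zero', sgnpow_zero']
  · exact key t h

lemma le_level' {T : RTree} {γ α : T.E} (h : T.Le γ α) : T.level γ ≤ T.level α := by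
  induction h with
  | refl => exact le_refl _
  | tail h' step ih => have := T.level_parent _ _ step; omega

lemma le_iff_child' {T : RTree} {β π : T.E} (h : T.parent β = some π) (γ : T.E) :
    T.Le γ β ↔ γ = β ∨ T.Le γ π := by
  constructor
  · intro hle
    rcases hle.cases_tail with h1 | ⟨c, hc, hstep⟩
    · exact Or.inl h1.symm
    · right
      rw [h] at hstep
      exact (Option.some.inj hstep) ▸ hc
  · rintro (rfl | hle)
    · exact Relation.ReflTransGen.refl
    · exact hle.tail h

lemma child_not_le' {T : RTree} {β π : T.E} (h : T.parent β = some π) :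
    β ∉ {γ | T.Le γ π} := by
  intro hle
  have h1 := le_level' hle
  have h2 := T.level_parent β π h
  omega

lemma ancestors_finite' (T : RTree) (α : T.E) : {γ | T.Le γ α}.Finite := by
  suffices h : ∀ n α, T.level α = n → {γ | T.Le γ α}.Finite from h _ α rfl
  intro n
  induction n using Nat.strong_induction_on with
  | _ n ih =>
    intro α hn
    by_cases hr : α = T.root
    · subst hr
      have : {γ | T.Le γ T.root} = {T.root} := by
        ext γ
        simp only [Set.mem_setOf_eq, Set.mem_singleton_iff]
        constructor
        · intro hle
          rcases hle.cases_tail with h1 | ⟨c, hc, hstep⟩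
          · exact h1.symm
          · rw [T.parent_root] at hstep; exact absurd hstep (by simp)
        · rintro rfl; exact Relation.ReflTransGen.refl
      rw [this]; exact Set.finite_singleton _
    · obtain ⟨π, hπ⟩ := Option.isSome_iff_exists.mp (T.parent_isSome α hr)
      have hset : {γ | T.Le γ α} = insert α {γ | T.Le γ π} := by
        ext γ; simpa using le_iff_child' hπ γ
      have hlev := T.level_parent α π hπ
      rw [hset]
      exact ((ih (T.level π) (by omega) π rfl).insert α)

end Aux


/-- Let `1 < p < ∞` with conjugate exponent `q = p′`. A function `f : E(T) → ℝ`
is forward additive iff the vertex function `g = I(f_p)` (here given through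
`G α = I(f_p)(e(α))`, the sum of `f_p = sgn(f)|f|^{q−1}` over the edges from the
root to `α`; the value at `b(α)` is `G α − f_p α`, and `g(o) = 0`) is
`p`-harmonic at every vertex `x ≠ o`:
`Σ_{y∼x} sgn(g(y)−g(x))|g(y)−g(x)|^{p−1} = 0`.
The vertices `≠ o` are exactly the ending vertices `e(α)` of the edges, whose
neighbours are `b(α)` and the ending vertices of the children of `α`. -/
theorem stmt7 (T : RTree) (p q : ℝ) (hp : 1 < p) (hpq : 1 / p + 1 / q = 1)
    (f : T.E → ℝ) :
    letI fp : T.E → ℝ := fun α => sgnpow (f α) (q - 1)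
    letI G : T.E → ℝ := fun α => ∑ᶠ γ ∈ {γ : T.E | T.Le γ α}, fp γ
    ((∀ α : T.E, f α = ∑ᶠ β ∈ {β : T.E | T.parent β = some α}, f β) ↔
      ∀ α : T.E,
        (∑ᶠ β ∈ {β : T.E | T.parent β = some α}, sgnpow (G β - G α) (p - 1)) +
          sgnpow ((G α - fp α) - G α) (p - 1) = 0) :=  by
  classical
  set fp : T.E → ℝ := fun α => sgnpow (f α) (q - 1) with hfp
  set G : T.E → ℝ := fun α => ∑ᶠ γ ∈ {γ : T.E | T.Le γ α}, fp γ with hGdef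
  have hp0 : p ≠ 0 := ne_of_gt (by linarith)
  have hq0 : q ≠ 0 := by
    intro h
    rw [h, div_zero, add_zero] at hpq
    have : (1 : ℝ) = p := (div_eq_one_iff_eq hp0).mp hpq
    linarith
  have hpq' : q + p = p * q := by
    field_simp at hpq
    linarith
  have hprod : (q - 1) * (p - 1) = 1 := by nlinarith
  have hcomp : ∀ t : ℝ, sgnpow (sgnpow t (q - 1)) (p - 1) = t := fun t =>
    sgnpow_sgnpow' hprod
  have hG : ∀ α β : T.E, T.parent β = some α → G β = fp β + G α := by
    intro α β hβ
    have hfin := ancestors_finite' T α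
    have hset : {γ : T.E | T.Le γ β} = insert β {γ | T.Le γ α} := by
      ext γ; simpa using le_iff_child' hβ γ
    show (∑ᶠ γ ∈ {γ : T.E | T.Le γ β}, fp γ) = fp β + ∑ᶠ γ ∈ {γ : T.E | T.Le γ α}, fp γ
    have hmem : β ∉ hfin.toFinset := by
      simpa [Set.Finite.mem_toFinset] using child_not_le' hβ
    rw [hset, ← hfin.coe_toFinset, ← Finset.coe_insert, finsum_mem_coe_finset,
      finsum_mem_coe_finset, Finset.sum_insert hmem]
  have key : ∀ α : T.E,
      (∑ᶠ β ∈ {β : T.E | T.parent β = some α}, sgnpow (G β - G α) (p - 1)) +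
        sgnpow ((G α - fp α) - G α) (p - 1)
      = (∑ᶠ β ∈ {β : T.E | T.parent β = some α}, f β) - f α := by
    intro α
    have h1 : ∀ β ∈ {β : T.E | T.parent β = some α},
        sgnpow (G β - G α) (p - 1) = f β := by
      intro β hβ
      rw [hG α β hβ, show fp β + G α - G α = fp β from by ring]
      exact hcomp (f β)
    rw [finsum_mem_congr rfl h1, show (G α - fp α) - G α = -(fp α) from by ring,
      sgnpow_neg']
    have : sgnpow (fp α) (p - 1) = f α := hcomp (f α)
    rw [this]
    ring
  constructor
  · intro h α
    rw [key α, ← h α]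
    ring
  · intro h α
    have := h α
    rw [key α] at this
    linarith
end

section
/- Let T be a spherically symmetric rooted tree, with N_k = card{β ∈ E(T) : |β| = k} edges at level k. Then for 1 < p < ∞, the p-capacity of its boundary is c_p(∂T) = ( Σ_{k=0}^∞ N_k^{1−p′} )^{1−p}, where 1/p + 1/p′ = 1 (with the convention c_p(∂T) = 0 when the series diverges). -/
open scoped ENNReal
open MeasureTheory

open RTree

/-!
For the lower bound, weight an admissible `f` by `N_k` on level `k`. Spherical symmetry makes
the average over the edges `β` of level `n` of `Σ_{k ≤ n} N_k f(β_k)^p` along their geodesics at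
most `‖f‖_p^p`, so by Kőnig's lemma some boundary point `ζ` has `Σ_k N_k f(ζ_k)^p ≤ ‖f‖_p^p`.
Hölder's inequality with weights `N_k^{1-p'}` then gives
`1 ≤ If(ζ) ≤ ‖f‖_p (Σ_k N_k^{1-p'})^{1/p'}`. For the upper bound, the level function
`N_k^{1-p'} / Σ_{j<m} N_j^{1-p'}` on the levels `k < m` is admissible with energy
`(Σ_{k<m} N_k^{1-p'})^{1-p}`; let `m → ∞`. If some level is empty, the boundary is empty and
both sides vanish.
-/

namespace ENNReal

lemma exists_le_of_tsum_le {ι : Type*} [Finite ι] [Nonempty ι] {f g : ι → ℝ≥0∞}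
    (h : ∑' i, f i ≤ ∑' i, g i) : ∃ i, f i ≤ g i := by
  cases nonempty_fintype ι
  rw [tsum_fintype, tsum_fintype] at h
  obtain ⟨i, -, hi⟩ := exists_le_of_sum_le Finset.univ_nonempty h
  exact ⟨i, hi⟩

/-- Hölder's inequality for `a i * w i ^ p⁻¹` and `w i ^ (-p⁻¹)`. -/
lemma tsum_le_tsum_rpow_mul_tsum_mul_rpow {ι : Type*} {p q : ℝ}
    (hpq : p.HolderConjugate q) (a w : ι → ℝ≥0∞) (hw₀ : ∀ i, w i ≠ 0) (hw : ∀ i, w i ≠ ⊤) :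
    ∑' i, a i ≤ (∑' i, w i ^ (1 - q)) ^ q⁻¹ * (∑' i, w i * a i ^ p) ^ p⁻¹ := by
  have hmul (i : ι) : w i ^ (1 - q) * (a i * w i ^ (q - 1)) = a i := by
    rw [mul_left_comm, ← rpow_add _ _ (hw₀ i) (hw i)]
    simp
  have hmul_rpow (i : ι) : w i ^ (1 - q) * (a i * w i ^ (q - 1)) ^ p = w i * a i ^ p := by
    rw [mul_rpow_of_nonneg _ _ hpq.nonneg, ← rpow_mul, mul_left_comm,
      ← rpow_add _ _ (hw₀ i) (hw i),
      show 1 - q + (q - 1) * p = 1 by linarith [hpq.mul_eq_add], rpow_one, mul_comm]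
  rw [ENNReal.tsum_eq_iSup_sum]
  refine iSup_le fun s => ?_
  calc ∑ i ∈ s, a i = ∑ i ∈ s, w i ^ (1 - q) * (a i * w i ^ (q - 1)) := by simp only [hmul]
    _ ≤ (∑ i ∈ s, w i ^ (1 - q)) ^ (1 - p⁻¹) *
          (∑ i ∈ s, w i ^ (1 - q) * (a i * w i ^ (q - 1)) ^ p) ^ p⁻¹ :=
        inner_le_weight_mul_Lp_of_nonneg s hpq.lt.le _ _
    _ ≤ _ := by
        rw [hpq.one_sub_inv]
        simp only [hmul_rpow]
        exact mul_le_mul'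
          (rpow_le_rpow (ENNReal.sum_le_tsum s) (inv_nonneg.2 hpq.symm.nonneg))
          (rpow_le_rpow (ENNReal.sum_le_tsum s) (inv_nonneg.2 hpq.nonneg))

lemma rpow_one_sub_le_of_one_le_mul {p q : ℝ} (hpq : p.HolderConjugate q)
    {S E : ℝ≥0∞} (h : 1 ≤ S ^ q⁻¹ * E ^ p⁻¹) : S ^ (1 - p) ≤ E := by
  have h' : 1 ≤ S ^ (p - 1) * E := by
    have := rpow_le_rpow h hpq.nonneg
    rwa [one_rpow, mul_rpow_of_nonneg _ _ hpq.nonneg, ← rpow_mul,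
      ← rpow_mul, inv_mul_cancel₀ hpq.ne_zero, rpow_one, inv_mul_eq_div,
      hpq.div_conj_eq_sub_one] at this
  rcases eq_or_ne E ⊤ with rfl | hE
  · exact le_top
  rw [← neg_sub, rpow_neg,
    inv_le_iff_le_mul (fun h => absurd h hE) fun _ h0 => by simp [h0] at h']
  exact h'

end ENNReal

namespace RTree

/-- The `N_k` of the statement. -/
noncomputable def levelCard (T : RTree) (k : ℕ) : ℕ := Nat.card {β : T.E // T.level β = k}

noncomputable def childCard (T : RTree) (α : T.E) : ℕ := Nat.card {γ : T.E // T.parent γ = some α}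

def SphericallySymmetric (T : RTree) : Prop :=
  ∀ α β : T.E, T.level α = T.level β → T.childCard α = T.childCard β

variable {T : RTree}

lemma exists_parent_of_level_eq_succ {β : T.E} {k : ℕ} (h : T.level β = k + 1) :
    ∃ α, T.parent β = some α ∧ T.level α = k := by
  have hβ : β ≠ T.root := by rintro rfl; simp [T.level_root] at h
  obtain ⟨α, hα⟩ := Option.isSome_iff_exists.1 (T.parent_isSome β hβ)
  exact ⟨α, hα, by have := T.level_parent β α hα; omega⟩

lemma eq_root_of_level_eq_zero {β : T.E} (h : T.level β = 0) : β = T.root := by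
  by_contra hβ
  obtain ⟨α, hα⟩ := Option.isSome_iff_exists.1 (T.parent_isSome β hβ)
  have := T.level_parent β α hα
  omega

lemma root_le (β : T.E) : T.Le T.root β := by
  induction hn : T.level β generalizing β with
  | zero => rw [eq_root_of_level_eq_zero hn]; exact .refl
  | succ n ih =>
    obtain ⟨α, hα, hαn⟩ := exists_parent_of_level_eq_succ hn
    exact (ih α hαn).tail hα

lemma level_seq (ζ : T.Boundary) (n : ℕ) : T.level (ζ.seq n) = n := by
  induction n with
  | zero => rw [ζ.seq_zero, T.level_root]
  | succ n ih => rw [T.level_parent _ _ (ζ.seq_parent n), ih]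

instance finite_children (α : T.E) : Finite {γ : T.E // T.parent γ = some α} :=
  (T.locFin α).to_subtype

noncomputable def levelSuccEquiv (T : RTree) (k : ℕ) :
    (Σ α : {α : T.E // T.level α = k}, {γ : T.E // T.parent γ = some α.1}) ≃
      {β : T.E // T.level β = k + 1} :=
  Equiv.ofBijective (fun x => ⟨x.2.1, by rw [T.level_parent _ _ x.2.2, x.1.2]⟩) <| by
    refine ⟨?_, fun ⟨β, hβ⟩ => ?_⟩
    · rintro ⟨⟨α₁, hα₁⟩, ⟨γ, hγ₁⟩⟩ ⟨⟨α₂, hα₂⟩, ⟨γ', hγ₂⟩⟩ hγ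
      obtain rfl : γ = γ' := congrArg Subtype.val hγ
      obtain rfl : α₁ = α₂ := Option.some_injective _ (hγ₁.symm.trans hγ₂)
      rfl
    · obtain ⟨α, hα, hαk⟩ := exists_parent_of_level_eq_succ hβ
      exact ⟨⟨⟨α, hαk⟩, ⟨β, hα⟩⟩, rfl⟩

instance finite_level (k : ℕ) : Finite {β : T.E // T.level β = k} := by
  induction k with
  | zero =>
    have : Subsingleton {β : T.E // T.level β = 0} := ⟨fun a b =>
      Subtype.ext ((eq_root_of_level_eq_zero a.2).trans (eq_root_of_level_eq_zero b.2).symm)⟩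
    infer_instance
  | succ k ih => exact Finite.of_equiv _ (T.levelSuccEquiv k)

lemma tsum_level_succ (g : T.E → ℝ≥0∞) (k : ℕ) :
    ∑' β : {β : T.E // T.level β = k + 1}, g β =
      ∑' α : {α : T.E // T.level α = k}, ∑' γ : {γ : T.E // T.parent γ = some α.1}, g γ := by
  rw [← (T.levelSuccEquiv k).tsum_eq, ENNReal.tsum_sigma']
  rfl

lemma tsum_eq_tsum_level (g : T.E → ℝ≥0∞) :
    ∑' β, g β = ∑' k, ∑' β : {β : T.E // T.level β = k}, g β := by
  rw [← (Equiv.sigmaFiberEquiv T.level).tsum_eq g, ENNReal.tsum_sigma']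
  rfl

lemma tsum_const_level (c : ℝ≥0∞) (k : ℕ) :
    ∑' _ : {β : T.E // T.level β = k}, c = T.levelCard k * c := by
  rw [ENNReal.tsum_const, ENat.card_eq_coe_natCard, ENat.toENNReal_coe]
  rfl

lemma tsum_const_children (c : ℝ≥0∞) (α : T.E) :
    ∑' _ : {γ : T.E // T.parent γ = some α}, c = T.childCard α * c := by
  rw [ENNReal.tsum_const, ENat.card_eq_coe_natCard, ENat.toENNReal_coe]
  rfl

lemma tsum_comp_level (h : ℕ → ℝ≥0∞) :
    ∑' β, h (T.level β) = ∑' k, T.levelCard k * h k := by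
  rw [tsum_eq_tsum_level]
  refine tsum_congr fun k => ?_
  rw [← tsum_const_level]
  exact tsum_congr fun β => congrArg h β.2

lemma levelCard_succ (hT : T.SphericallySymmetric) {α : T.E} {k : ℕ} (hα : T.level α = k) :
    (T.levelCard (k + 1) : ℝ≥0∞) = T.levelCard k * T.childCard α := by
  have h := tsum_level_succ (T := T) (fun _ => 1) k
  rw [tsum_const_level, mul_one] at h
  rw [h, ← tsum_const_level]
  refine tsum_congr fun α' => ?_
  rw [← hT α'.1 α (α'.2.trans hα.symm), tsum_const_children, mul_one]

noncomputable def pathSum (T : RTree) (w : T.E → ℝ≥0∞) (β : T.E) : ℝ≥0∞ :=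
  match h : T.parent β with
  | none => w β
  | some α =>
    have := T.level_parent β α h
    T.pathSum w α + w β
termination_by T.level β

lemma pathSum_root (w : T.E → ℝ≥0∞) : T.pathSum w T.root = w T.root := by
  rw [pathSum]
  split
  · rfl
  · next h => exact absurd (T.parent_root.symm.trans h) nofun

lemma pathSum_of_parent {w : T.E → ℝ≥0∞} {α β : T.E} (h : T.parent β = some α) :
    T.pathSum w β = T.pathSum w α + w β := by
  rw [pathSum]
  split <;> simp_all

lemma pathSum_mono {w : T.E → ℝ≥0∞} {α β : T.E} (h : T.Le α β) :
    T.pathSum w α ≤ T.pathSum w β := by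
  induction h with
  | refl => exact le_rfl
  | tail _ hstep ih => exact ih.trans ((pathSum_of_parent hstep).symm ▸ le_self_add)

lemma pathSum_seq (w : T.E → ℝ≥0∞) (ζ : T.Boundary) (n : ℕ) :
    T.pathSum w (ζ.seq n) = ∑ k ∈ Finset.range (n + 1), w (ζ.seq k) := by
  induction n with
  | zero => rw [Finset.sum_range_one, ζ.seq_zero, pathSum_root]
  | succ n ih => rw [Finset.sum_range_succ, pathSum_of_parent (ζ.seq_parent n), ih]

/-- In a spherically symmetric tree an edge at level `k` has `N_n / N_k` descendants at level
`n ≥ k`, so weighting by `N_k` makes every level contribute its full mass. -/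
lemma tsum_level_pathSum (hT : T.SphericallySymmetric) (hN : ∀ k, T.levelCard k ≠ 0)
    (g : T.E → ℝ≥0∞) (n : ℕ) :
    ∑' β : {β : T.E // T.level β = n}, T.pathSum (fun γ => T.levelCard (T.level γ) * g γ) β =
      T.levelCard n * ∑ k ∈ Finset.range (n + 1), ∑' β : {β : T.E // T.level β = k}, g β := by
  set w : T.E → ℝ≥0∞ := fun γ => T.levelCard (T.level γ) * g γ
  have hw (k : ℕ) : ∑' β : {β : T.E // T.level β = k}, w β =
      T.levelCard k * ∑' β : {β : T.E // T.level β = k}, g β := by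
    rw [← ENNReal.tsum_mul_left]
    exact tsum_congr fun β => by simp only [w, β.2]
  induction n with
  | zero =>
    rw [Finset.sum_range_one, ← hw]
    exact tsum_congr fun β => by rw [eq_root_of_level_eq_zero β.2, pathSum_root]
  | succ n ih =>
    obtain ⟨⟨α, hα⟩⟩ := (Nat.card_ne_zero.1 (hN n)).1
    calc ∑' β : {β : T.E // T.level β = n + 1}, T.pathSum w β
        = ∑' α' : {α : T.E // T.level α = n},
            (T.childCard α * T.pathSum w α' + ∑' γ : {γ : T.E // T.parent γ = some α'.1}, w γ) := by
          rw [tsum_level_succ]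
          refine tsum_congr fun α' => ?_
          rw [← hT α'.1 α (α'.2.trans hα.symm), ← tsum_const_children, ← ENNReal.tsum_add]
          exact tsum_congr fun γ => pathSum_of_parent γ.2
      _ = T.childCard α * (T.levelCard n * ∑ k ∈ Finset.range (n + 1),
              ∑' β : {β : T.E // T.level β = k}, g β) +
            T.levelCard (n + 1) * ∑' β : {β : T.E // T.level β = n + 1}, g β := by
          rw [ENNReal.tsum_add, ENNReal.tsum_mul_left, ih, ← tsum_level_succ, hw]
      _ = _ := by
          rw [levelCard_succ hT hα, Finset.sum_range_succ _ (n + 1)]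
          ring

lemma exists_level_pathSum_le (hT : T.SphericallySymmetric) (hN : ∀ k, T.levelCard k ≠ 0)
    (g : T.E → ℝ≥0∞) (n : ℕ) :
    ∃ β, T.level β = n ∧
      T.pathSum (fun γ => T.levelCard (T.level γ) * g γ) β ≤ ∑' β, g β := by
  have : Nonempty {β : T.E // T.level β = n} := (Nat.card_ne_zero.1 (hN n)).1
  have hsum : ∑' β : {β : T.E // T.level β = n},
      T.pathSum (fun γ => T.levelCard (T.level γ) * g γ) β ≤
        ∑' _ : {β : T.E // T.level β = n}, ∑' β, g β := by
    rw [tsum_level_pathSum hT hN, tsum_const_level, tsum_eq_tsum_level g]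
    gcongr
    exact ENNReal.sum_le_tsum _
  obtain ⟨β, hβ⟩ := ENNReal.exists_le_of_tsum_le hsum
  exact ⟨β.1, β.2, hβ⟩

theorem exists_boundary_forall_of_infinite {P : T.E → Prop}
    (hP : ∀ ⦃α β⦄, T.Le α β → P β → P α) (hinf : {β | P β}.Infinite) :
    ∃ ζ : T.Boundary, ∀ n, P (ζ.seq n) := by
  let Good (β : T.E) : Prop := {δ | T.Le β δ ∧ P δ}.Infinite
  have hroot : Good T.root := hinf.mono fun δ hδ => ⟨root_le δ, hδ⟩
  have hstep (β : T.E) (hβ : Good β) : ∃ γ, T.parent γ = some β ∧ Good γ := by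
    by_contra! hbad
    refine hβ (((Set.finite_singleton β).union
      ((T.locFin β).biUnion fun γ hγ => Set.not_infinite.1 (hbad γ hγ))).subset ?_)
    rintro δ ⟨hβδ, hδ⟩
    rcases Relation.ReflTransGen.cases_head hβδ with rfl | ⟨γ, hγ, hγδ⟩
    · exact Or.inl rfl
    · exact Or.inr (Set.mem_biUnion hγ ⟨hγδ, hδ⟩)
  choose next hnext using hstep
  let ray (n : ℕ) : {β // Good β} :=
    (fun β : {β // Good β} => ⟨next β.1 β.2, (hnext β.1 β.2).2⟩)^[n] ⟨T.root, hroot⟩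
  refine ⟨⟨fun n => (ray n).1, rfl, fun n => ?_⟩, fun n => ?_⟩
  · simp only [ray, Function.iterate_succ_apply']
    exact (hnext _ _).1
  · obtain ⟨δ, hle, hδ⟩ := (ray n).2.nonempty
    exact hP hle hδ

lemma exists_boundary_tsum_levelCard_mul_le (hT : T.SphericallySymmetric)
    (hN : ∀ k, T.levelCard k ≠ 0) (g : T.E → ℝ≥0∞) :
    ∃ ζ : T.Boundary, ∑' n, T.levelCard n * g (ζ.seq n) ≤ ∑' β, g β := by
  choose β hβ hle using exists_level_pathSum_le hT hN g
  obtain ⟨ζ, hζ⟩ := exists_boundary_forall_of_infinite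
    (P := fun β => T.pathSum (fun γ => T.levelCard (T.level γ) * g γ) β ≤ ∑' β, g β)
    (fun _ _ hαβ h => (pathSum_mono hαβ).trans h)
    (Set.infinite_of_injective_forall_mem (fun m n h => by rw [← hβ m, ← hβ n, h]) hle)
  refine ⟨ζ, ENNReal.tsum_le_of_sum_range_le fun n => ?_⟩
  cases n with
  | zero => simp
  | succ n => simpa only [pathSum_seq, level_seq] using hζ n

lemma tentE_root : T.tentE T.root = Set.univ :=
  Set.eq_univ_of_forall root_le

lemma cap_univ_le {p : ℝ} {f : T.E → ℝ≥0∞} (hf : ∀ ζ : T.Boundary, 1 ≤ ∑' n, f (ζ.seq n)) :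
    T.cap p Set.univ ≤ ∑' β, f β ^ p := by
  refine iInf₂_le_of_le f (fun ζ _ => ?_) ?_
  · simpa only [relPot, tentE_root, Set.indicator_univ] using hf ζ
  · simp only [relEnergy, tentE_root, Set.indicator_univ, le_refl]

lemma le_cap_univ {p : ℝ} {c : ℝ≥0∞}
    (h : ∀ f : T.E → ℝ≥0∞, (∀ ζ : T.Boundary, 1 ≤ ∑' n, f (ζ.seq n)) → c ≤ ∑' β, f β ^ p) :
    c ≤ T.cap p Set.univ := by
  refine le_iInf₂ fun f hf => ?_
  simp only [relEnergy, tentE_root, Set.indicator_univ]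
  exact h f fun ζ => by simpa only [relPot, tentE_root, Set.indicator_univ] using hf ζ trivial

lemma cap_univ_eq_zero_of_levelCard_eq_zero {p : ℝ} (hp : 0 < p) {k : ℕ}
    (hk : T.levelCard k = 0) : T.cap p Set.univ = 0 := by
  refine le_antisymm ((cap_univ_le (f := 0) fun ζ => ?_).trans_eq (by simp [hp])) zero_le
  have : Nonempty {β : T.E // T.level β = k} := ⟨⟨ζ.seq k, level_seq ζ k⟩⟩
  exact absurd hk Nat.card_pos.ne'

lemma cap_univ_le_tsum_levelCard_mul (p : ℝ) (g : ℕ → ℝ≥0∞) (hg : 1 ≤ ∑' k, g k) :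
    T.cap p Set.univ ≤ ∑' k, T.levelCard k * g k ^ p := by
  rw [← tsum_comp_level fun k => g k ^ p]
  exact cap_univ_le fun ζ => by simpa only [level_seq] using hg

lemma cap_univ_le_rpow_sum {p q : ℝ} (hpq : p.HolderConjugate q) (hN : ∀ k, T.levelCard k ≠ 0)
    {m : ℕ} (hm : 0 < m) :
    T.cap p Set.univ ≤ (∑ k ∈ Finset.range m, (T.levelCard k : ℝ≥0∞) ^ (1 - q)) ^ (1 - p) := by
  set S := ∑ k ∈ Finset.range m, (T.levelCard k : ℝ≥0∞) ^ (1 - q)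
  have hN₀ (k : ℕ) : (T.levelCard k : ℝ≥0∞) ≠ 0 := Nat.cast_ne_zero.2 (hN k)
  have hNt (k : ℕ) : (T.levelCard k : ℝ≥0∞) ≠ ⊤ := ENNReal.natCast_ne_top _
  have hS₀ : S ≠ 0 := Finset.sum_eq_zero_iff.not.2 fun h =>
    (ENNReal.rpow_pos (pos_iff_ne_zero.2 (hN₀ 0)) (hNt 0)).ne' (h 0 (Finset.mem_range.2 hm))
  have hSt : S ≠ ⊤ :=
    ENNReal.sum_ne_top.2 fun k _ => ENNReal.rpow_ne_top_of_ne_zero (hN₀ k) (hNt k)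
  have hmul_rpow {x : ℝ≥0∞} (h₀ : x ≠ 0) (ht : x ≠ ⊤) (r : ℝ) : x * x ^ r = x ^ (1 + r) := by
    rw [ENNReal.rpow_add _ _ h₀ ht, ENNReal.rpow_one]
  -- the extremal function of Hölder's inequality in `rpow_tsum_levelCard_le`, cut off at level `m`
  let g (k : ℕ) : ℝ≥0∞ := if k < m then (T.levelCard k : ℝ≥0∞) ^ (1 - q) * S⁻¹ else 0
  have hg : ∑' k, g k = 1 := by
    rw [tsum_eq_sum (s := Finset.range m) fun k hk => if_neg (by simpa using hk),
      Finset.sum_congr rfl fun k hk => if_pos (Finset.mem_range.1 hk), ← Finset.sum_mul,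
      ENNReal.mul_inv_cancel hS₀ hSt]
  have hg_rpow (k : ℕ) (hk : k < m) :
      T.levelCard k * g k ^ p = (T.levelCard k : ℝ≥0∞) ^ (1 - q) * (S ^ p)⁻¹ := by
    rw [show g k = _ from if_pos hk, ENNReal.mul_rpow_of_nonneg _ _ hpq.nonneg, ENNReal.inv_rpow,
      ← mul_assoc, ← ENNReal.rpow_mul, hmul_rpow (hN₀ k) (hNt k),
      show 1 + (1 - q) * p = 1 - q by linarith [hpq.mul_eq_add]]
  calc T.cap p Set.univ ≤ ∑' k, T.levelCard k * g k ^ p :=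
        cap_univ_le_tsum_levelCard_mul p g hg.ge
    _ = S * (S ^ p)⁻¹ := by
        rw [tsum_eq_sum (s := Finset.range m) fun k hk => by
              simp [g, show ¬k < m by simpa using hk, ENNReal.zero_rpow_of_pos hpq.pos],
          Finset.sum_congr rfl fun k hk => hg_rpow k (Finset.mem_range.1 hk), ← Finset.sum_mul]
    _ = S ^ (1 - p) := by
        rw [← ENNReal.rpow_neg, hmul_rpow hS₀ hSt, ← sub_eq_add_neg]

lemma cap_univ_le_rpow_tsum {p q : ℝ} (hpq : p.HolderConjugate q) (hN : ∀ k, T.levelCard k ≠ 0) :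
    T.cap p Set.univ ≤ (∑' k, (T.levelCard k : ℝ≥0∞) ^ (1 - q)) ^ (1 - p) :=
  ge_of_tendsto ((ENNReal.tendsto_nat_tsum _).ennrpow_const (1 - p))
    (Filter.eventually_atTop.2 ⟨1, fun _ hm => cap_univ_le_rpow_sum hpq hN hm⟩)

lemma rpow_tsum_levelCard_le {p q : ℝ} (hpq : p.HolderConjugate q) (hT : T.SphericallySymmetric)
    (hN : ∀ k, T.levelCard k ≠ 0) {f : T.E → ℝ≥0∞}
    (hf : ∀ ζ : T.Boundary, 1 ≤ ∑' n, f (ζ.seq n)) :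
    (∑' k, (T.levelCard k : ℝ≥0∞) ^ (1 - q)) ^ (1 - p) ≤ ∑' β, f β ^ p := by
  obtain ⟨ζ, hζ⟩ := exists_boundary_tsum_levelCard_mul_le hT hN fun β => f β ^ p
  refine ENNReal.rpow_one_sub_le_of_one_le_mul hpq ((hf ζ).trans ?_)
  calc ∑' n, f (ζ.seq n)
      ≤ (∑' n, (T.levelCard n : ℝ≥0∞) ^ (1 - q)) ^ q⁻¹ *
          (∑' n, T.levelCard n * f (ζ.seq n) ^ p) ^ p⁻¹ :=
        ENNReal.tsum_le_tsum_rpow_mul_tsum_mul_rpow hpq _ _ (fun n => Nat.cast_ne_zero.2 (hN n))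
          fun n => ENNReal.natCast_ne_top _
    _ ≤ _ := by gcongr; exact inv_nonneg.2 hpq.nonneg

end RTree

theorem stmt8_general (T : RTree) (p q : ℝ) (hp : 1 < p) (hpq : 1 / p + 1 / q = 1)
    (hsym : ∀ α β : T.E, T.level α = T.level β →
      Nat.card {γ : T.E // T.parent γ = some α} =
        Nat.card {γ : T.E // T.parent γ = some β}) :
    T.cap p Set.univ =
      (∑' k : ℕ, (Nat.card {α : T.E // T.level α = k} : ℝ≥0∞) ^ ((1 : ℝ) - q))
        ^ ((1 : ℝ) - p) := by
  have hpq' : p.HolderConjugate q :=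
    Real.holderConjugate_iff.2 ⟨hp, by simpa only [one_div] using hpq⟩
  change T.cap p Set.univ = (∑' k, (T.levelCard k : ℝ≥0∞) ^ (1 - q)) ^ (1 - p)
  by_cases hN : ∀ k, T.levelCard k ≠ 0
  · exact le_antisymm (cap_univ_le_rpow_tsum hpq' hN)
      (le_cap_univ fun f hf => rpow_tsum_levelCard_le hpq' hsym hN hf)
  · obtain ⟨k, hk⟩ : ∃ k, T.levelCard k = 0 := by simpa using hN
    have hNk : (T.levelCard k : ℝ≥0∞) ^ (1 - q) = ⊤ := by
      rw [hk, Nat.cast_zero, ENNReal.zero_rpow_of_neg (by linarith [hpq'.symm.lt])]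
    rw [cap_univ_eq_zero_of_levelCard_eq_zero hpq'.pos hk, ENNReal.tsum_eq_top_of_eq_top ⟨k, hNk⟩,
      ENNReal.top_rpow_of_neg (by linarith)]

/-- For a spherically symmetric rooted tree without leaves (the number of
children of an edge depends only on its level), with `N_k` edges at level `k`,
the `p`-capacity of the boundary is
`c_p(∂T) = (Σ_{k=0}^∞ N_k^{1−p′})^{1−p}` (`= 0` if the series diverges,
by the conventions of `ℝ≥0∞`-valued exponentiation). -/
theorem stmt8 (T : RTree) (p q : ℝ) (hp : 1 < p) (hpq : 1 / p + 1 / q = 1)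
    (hleaf : ∀ α : T.E, ∃ β, T.parent β = some α)
    (hsym : ∀ α β : T.E, T.level α = T.level β →
      Nat.card {γ : T.E // T.parent γ = some α} =
        Nat.card {γ : T.E // T.parent γ = some β}) :
    T.cap p Set.univ =
      (∑' k : ℕ, (Nat.card {α : T.E // T.level α = k} : ℝ≥0∞) ^ ((1 : ℝ) - q))
        ^ ((1 : ℝ) - p) :=
  stmt8_general T p q hp hpq hsym
end

section
/- Let μ be a positive finite Borel measure on ∂T whose co-potential M(α) = μ(∂T_α) satisfies M(α)(1 − I(M^{p′−1})(b(α))) = Σ_{β≥α} M(β)^{p′} for all edges α. Then I(M^{p′−1})(ζ) = 1 for μ-almost every ζ ∈ ∂T. -/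
open scoped ENNReal
open MeasureTheory

namespace RTree

variable (T : RTree)

/-- `IM_p(b(α))` : the sum of `M_p = M^{q-1}` over the strict ancestors of the
edge `α`, where `M` is the co-potential of `μ`. -/
noncomputable def belowSum (q : ℝ) (μ : @Measure T.Boundary T.tborel) (α : T.E) : ℝ≥0∞ :=
  ∑' β : T.E, Set.indicator {γ | T.Le γ α ∧ γ ≠ α}
    (fun γ => μ (T.tentB γ) ^ (q - 1)) β

/-- `μ` is the `p`-equilibrium measure of `E` relative to the tent rooted at `α`
(here `q = p'` is the conjugate exponent of `p`): `μ` is supported on the closure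
of `E`, its potential is at least `1` on `E` off a set of zero capacity
(admissibility of `M_p = M^{q-1}`), the energy of `μ` equals the capacity of `E`
(so `M_p` is the capacitary minimizer), and the total mass of `μ` equals the
capacity of `E`. -/
def IsEqMeasure (p q : ℝ) (α : T.E) (E : Set T.Boundary)
    (μ : @Measure T.Boundary T.tborel) : Prop :=
  μ ((@closure _ T.ttop E)ᶜ) = 0 ∧
  (∃ Z : Set T.Boundary, T.relCap p α Z = 0 ∧
    ∀ ζ ∈ E \ Z, 1 ≤ T.relPot α (fun β => μ (T.tentB β) ^ (q - 1)) ζ) ∧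
  T.relEnergy p α (fun β => μ (T.tentB β) ^ (q - 1)) = T.relCap p α E ∧
  μ Set.univ = T.relCap p α E

end RTree

open RTree

/-! Write `M(α) = μ(∂T_α)`. At an edge with `M(α) > 0` the hypothesis gives
`M(α)^{p′} ≤ M(α)(1 − I(M^{p′−1})(b(α)))`, i.e. `I(M^{p′−1})(b(α)) + M(α)^{p′−1} ≤ 1`; so the
potential `I(M^{p′−1})` is at most `1` along every geodesic avoiding the countably many
`μ`-null tents, hence `μ`-a.e. By Tonelli, `∫ I(M^{p′−1}) dμ = Σ_β M(β)^{p′−1} M(β) = μ(∂T)`,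
the last step being the hypothesis at the root. A function that is `≤ 1` a.e. and has
integral `μ(∂T) < ∞` equals `1` a.e. -/

theorem ENNReal.add_rpow_sub_one_le_one {m b : ℝ≥0∞} {q : ℝ} (h0 : m ≠ 0) (htop : m ≠ ⊤)
    (h : m ^ q ≤ m * (1 - b)) : b + m ^ (q - 1) ≤ 1 := by
  rw [← sub_add_cancel q 1, ENNReal.rpow_add _ _ h0 htop, ENNReal.rpow_one, mul_comm] at h
  have hle : m ^ (q - 1) ≤ 1 - b := (ENNReal.mul_le_mul_iff_right h0 htop).mp h
  have hb : b ≤ 1 :=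
    (tsub_pos_iff_lt.mp ((ENNReal.rpow_pos (pos_iff_ne_zero.mpr h0) htop).trans_le hle)).le
  exact (ENNReal.le_sub_iff_add_le_left (ne_top_of_le_ne_top ENNReal.one_ne_top hb) hb).mp hle

theorem ENNReal.rpow_sub_one_mul_self {x : ℝ≥0∞} {q : ℝ} (hq : 0 < q) (htop : x ≠ ⊤) :
    x ^ (q - 1) * x = x ^ q := by
  rcases eq_or_ne x 0 with rfl | h0
  · rw [mul_zero, ENNReal.zero_rpow_of_pos hq]
  · conv_rhs => rw [← sub_add_cancel q 1, ENNReal.rpow_add _ _ h0 htop, ENNReal.rpow_one]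

namespace RTree

variable {T : RTree}

attribute [local instance] RTree.tborel

theorem eq_root_of_le_root {γ : T.E} (h : T.Le γ T.root) : γ = T.root := by
  rcases h.cases_tail with h | ⟨c, _, hc⟩
  · exact h.symm
  · simp [T.parent_root] at hc

namespace Boundary

variable (ζ : T.Boundary)

theorem level_seq (n : ℕ) : T.level (ζ.seq n) = n := by
  induction n with
  | zero => rw [ζ.seq_zero, T.level_root]
  | succ n ih => rw [T.level_parent _ _ (ζ.seq_parent n), ih]

theorem seq_injective : Function.Injective ζ.seq := fun m n h => by
  rw [← ζ.level_seq m, ← ζ.level_seq n, h]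

theorem le_seq_of_le {k n : ℕ} (h : k ≤ n) : T.Le (ζ.seq k) (ζ.seq n) := by
  induction n, h using Nat.le_induction with
  | base => exact .refl
  | succ n _ ih => exact ih.tail (ζ.seq_parent n)

theorem root_le_seq (n : ℕ) : T.Le T.root (ζ.seq n) :=
  ζ.seq_zero ▸ ζ.le_seq_of_le n.zero_le

theorem exists_seq_eq_of_le_seq {γ : T.E} {m : ℕ} (h : T.Le γ (ζ.seq m)) :
    ∃ k ≤ m, ζ.seq k = γ := by
  induction m generalizing γ with
  | zero =>
    rw [ζ.seq_zero] at h
    exact ⟨0, le_rfl, by rw [ζ.seq_zero, eq_root_of_le_root h]⟩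
  | succ m ih =>
    rcases h.cases_tail with h | ⟨c, hγc, hc⟩
    · exact ⟨m + 1, le_rfl, h⟩
    · obtain rfl : c = ζ.seq m := Option.some_injective _ (hc.symm.trans (ζ.seq_parent m))
      obtain ⟨k, hk, rfl⟩ := ih hγc
      exact ⟨k, hk.trans m.le_succ, rfl⟩

theorem mem_tentB_seq (n : ℕ) : ζ ∈ T.tentB (ζ.seq n) := ⟨n, rfl⟩

end Boundary

theorem finite_setOf_root_le_level_eq (n : ℕ) :
    {β : T.E | T.Le T.root β ∧ T.level β = n}.Finite := by
  induction n with
  | zero =>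
    refine (Set.finite_singleton T.root).subset fun β ⟨hβ, hlevel⟩ => ?_
    rcases hβ.cases_tail with h | ⟨c, _, hc⟩
    · exact Set.mem_singleton_iff.mpr h
    · have := T.level_parent β c hc; omega
  | succ n ih =>
    refine (ih.biUnion fun α _ => T.locFin α).subset fun β ⟨hβ, hlevel⟩ => ?_
    rcases hβ.cases_tail with h | ⟨c, hc, hpar⟩
    · subst h; rw [T.level_root] at hlevel; omega
    · have := T.level_parent β c hpar
      exact Set.mem_biUnion ⟨hc, by omega⟩ hpar

theorem countable_tentE_root : (T.tentE T.root).Countable := by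
  have : T.tentE T.root = ⋃ n, {β : T.E | T.Le T.root β ∧ T.level β = n} := by
    ext β; simp [tentE]
  rw [this]
  exact Set.countable_iUnion fun n => (finite_setOf_root_le_level_eq n).countable

instance : Countable (T.tentE T.root) := countable_tentE_root.to_subtype

theorem measurableSet_tentB (α : T.E) : MeasurableSet (T.tentB α) :=
  MeasurableSpace.measurableSet_generateFrom
    (TopologicalSpace.isOpen_generateFrom_of_mem ⟨α, rfl⟩)

theorem tentB_root : T.tentB T.root = Set.univ :=
  Set.eq_univ_of_forall fun ζ => ⟨0, ζ.seq_zero⟩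

theorem relPot_root_eq_tsum_seq (f : T.E → ℝ≥0∞) (ζ : T.Boundary) :
    T.relPot T.root f ζ = ∑' n, f (ζ.seq n) :=
  tsum_congr fun n => Set.indicator_of_mem (ζ.root_le_seq n) f

theorem relPot_root_eq_tsum_indicator (f : T.E → ℝ≥0∞) (ζ : T.Boundary) :
    T.relPot T.root f ζ = ∑' β : T.tentE T.root, (T.tentB β).indicator (fun _ => f β) ζ := by
  let g : ℕ → T.tentE T.root := fun n => ⟨ζ.seq n, ζ.root_le_seq n⟩
  have hg : Function.Injective g := fun m n h => ζ.seq_injective (congrArg Subtype.val h)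
  have hsupp : Function.support (fun β : T.tentE T.root =>
      (T.tentB β).indicator (fun _ => f β) ζ) ⊆ Set.range g := by
    intro β hβ
    obtain ⟨n, hn⟩ := Set.mem_of_indicator_ne_zero hβ
    exact ⟨n, Subtype.ext hn⟩
  rw [relPot_root_eq_tsum_seq, ← hg.tsum_eq hsupp]
  exact tsum_congr fun n => (Set.indicator_of_mem (ζ.mem_tentB_seq n) (fun _ => f (ζ.seq n))).symm

theorem lintegral_relPot_root (μ : Measure T.Boundary) (f : T.E → ℝ≥0∞) :
    ∫⁻ ζ, T.relPot T.root f ζ ∂μ = ∑' β : T.tentE T.root, f β * μ (T.tentB β) := by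
  simp_rw [relPot_root_eq_tsum_indicator f]
  rw [lintegral_tsum fun β => (measurable_const.indicator (measurableSet_tentB _)).aemeasurable]
  exact tsum_congr fun β => by
    rw [lintegral_indicator (measurableSet_tentB _), setLIntegral_const]

theorem ae_forall_measure_tentB_seq_ne_zero (μ : Measure T.Boundary) :
    ∀ᵐ ζ ∂μ, ∀ n, μ (T.tentB (ζ.seq n)) ≠ 0 := by
  let Z := {β : T.E | β ∈ T.tentE T.root ∧ μ (T.tentB β) = 0}
  have : Countable Z := (countable_tentE_root.mono fun _ hβ => hβ.1).to_subtype
  refine ae_iff.mpr (measure_mono_null (t := ⋃ β : Z, T.tentB β) ?_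
    (measure_iUnion_null fun β => β.2.2))
  simp only [ne_eq, not_forall, not_not]
  rintro ζ ⟨n, hn⟩
  exact Set.mem_iUnion.mpr ⟨⟨ζ.seq n, ζ.root_le_seq n, hn⟩, ζ.mem_tentB_seq n⟩

theorem belowSum_root (q : ℝ) (μ : Measure T.Boundary) : T.belowSum q μ T.root = 0 := by
  refine ENNReal.tsum_eq_zero.mpr fun β => Set.indicator_of_notMem ?_ _
  exact fun ⟨hle, hne⟩ => hne (eq_root_of_le_root hle)

theorem belowSum_seq (q : ℝ) (μ : Measure T.Boundary) (ζ : T.Boundary) (n : ℕ) :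
    T.belowSum q μ (ζ.seq n) = ∑ k ∈ Finset.range n, μ (T.tentB (ζ.seq k)) ^ (q - 1) := by
  classical
  have hanc : ∀ k, k < n ↔ T.Le (ζ.seq k) (ζ.seq n) ∧ ζ.seq k ≠ ζ.seq n := fun k =>
    ⟨fun hk => ⟨ζ.le_seq_of_le hk.le, fun h => hk.ne (ζ.seq_injective h)⟩,
      fun ⟨hle, hne⟩ => by
        obtain ⟨j, hj, hjk⟩ := ζ.exists_seq_eq_of_le_seq hle
        rw [← ζ.seq_injective hjk] at hne ⊢
        exact hj.lt_of_ne fun h => hne (h ▸ rfl)⟩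
  have hsupp : ∀ β ∉ (Finset.range n).image ζ.seq, Set.indicator
      {γ | T.Le γ (ζ.seq n) ∧ γ ≠ ζ.seq n} (fun γ => μ (T.tentB γ) ^ (q - 1)) β = 0 := by
    refine fun β hβ => Set.indicator_of_notMem (fun hmem => hβ ?_) _
    obtain ⟨k, -, rfl⟩ := ζ.exists_seq_eq_of_le_seq hmem.1
    exact Finset.mem_image_of_mem _ (Finset.mem_range.mpr ((hanc k).mpr hmem))
  rw [belowSum, tsum_eq_sum hsupp, Finset.sum_image fun a _ b _ h => ζ.seq_injective h]
  exact Finset.sum_congr rfl fun k hk =>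
    Set.indicator_of_mem (s := {γ | T.Le γ (ζ.seq n) ∧ γ ≠ ζ.seq n})
      ((hanc k).mp (Finset.mem_range.mp hk)) (fun γ => μ (T.tentB γ) ^ (q - 1))

section Equilibrium

variable {q : ℝ} {μ : Measure T.Boundary}

theorem belowSum_add_rpow_sub_one_le_one [IsFiniteMeasure μ] {α : T.E}
    (heq : μ (T.tentB α) * (1 - T.belowSum q μ α) =
      ∑' β : T.E, Set.indicator (T.tentE α) (fun γ => μ (T.tentB γ) ^ q) β)
    (hα : μ (T.tentB α) ≠ 0) : T.belowSum q μ α + μ (T.tentB α) ^ (q - 1) ≤ 1 := by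
  refine ENNReal.add_rpow_sub_one_le_one hα (measure_ne_top μ _) (heq ▸ ?_)
  simpa [Set.indicator_of_mem (show α ∈ T.tentE α from .refl)] using
    ENNReal.le_tsum (f := Set.indicator (T.tentE α) (fun γ => μ (T.tentB γ) ^ q)) α

theorem ae_relPot_root_le_one [IsFiniteMeasure μ]
    (heq : ∀ α : T.E, μ (T.tentB α) * (1 - T.belowSum q μ α) =
      ∑' β : T.E, Set.indicator (T.tentE α) (fun γ => μ (T.tentB γ) ^ q) β) :
    ∀ᵐ ζ ∂μ, T.relPot T.root (fun β => μ (T.tentB β) ^ (q - 1)) ζ ≤ 1 := by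
  filter_upwards [ae_forall_measure_tentB_seq_ne_zero μ] with ζ hζ
  rw [relPot_root_eq_tsum_seq]
  refine ENNReal.tsum_le_of_sum_range_le fun n => ?_
  rw [← belowSum_seq]
  exact le_self_add.trans (belowSum_add_rpow_sub_one_le_one (heq _) (hζ n))

theorem lintegral_relPot_root_eq_measure_univ [IsFiniteMeasure μ] (hq : 0 < q)
    (heq : μ (T.tentB T.root) * (1 - T.belowSum q μ T.root) =
      ∑' β : T.E, Set.indicator (T.tentE T.root) (fun γ => μ (T.tentB γ) ^ q) β) :
    ∫⁻ ζ, T.relPot T.root (fun β => μ (T.tentB β) ^ (q - 1)) ζ ∂μ = μ Set.univ := by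
  rw [belowSum_root, tsub_zero, mul_one, tentB_root, ← tsum_subtype] at heq
  rw [lintegral_relPot_root, heq]
  exact tsum_congr fun β => ENNReal.rpow_sub_one_mul_self hq (measure_ne_top μ _)

end Equilibrium

end RTree

/-- If the co-potential `M(α) = μ(∂T_α)` of a finite positive Borel measure `μ`
on `∂T` satisfies `M(α)(1 − I(M^{p′−1})(b(α))) = Σ_{β≥α} M(β)^{p′}` for all
edges `α`, then `I(M^{p′−1})(ζ) = 1` for `μ`-almost every `ζ ∈ ∂T`. -/
theorem stmt15 (T : RTree) (p q : ℝ) (hp : 1 < p) (hpq : 1 / p + 1 / q = 1)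
    (μ : @Measure T.Boundary T.tborel) (hfin : @IsFiniteMeasure _ _ μ)
    (heq : ∀ α : T.E, μ (T.tentB α) * (1 - T.belowSum q μ α) =
      ∑' β : T.E, Set.indicator (T.tentE α) (fun γ => μ (T.tentB γ) ^ q) β) :
    μ {ζ : T.Boundary |
        T.relPot T.root (fun β => μ (T.tentB β) ^ (q - 1)) ζ ≠ 1} = 0 := by
  have hq : 0 < q := one_div_pos.mp (by linarith [(div_lt_one (by linarith)).mpr hp])
  have hint := lintegral_relPot_root_eq_measure_univ hq (heq T.root)
  have hae := ae_eq_of_ae_le_of_lintegral_le (ae_relPot_root_le_one heq)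
    (hint ▸ measure_ne_top μ _) aemeasurable_const (by simp [hint])
  exact ae_iff.mp hae
end
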